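/- Let R be a commutative ring, let S be a commutative R-algebra, and suppose there is an R-algebra homomorphism σ : S → R (so the composite R → S → R is the identity). Let M be an R-module such that the base change M ⊗[R] S is a free S-module. Then M is a free R-module. -/
import Mathlib

open scoped TensorProduct

/-- If `S` is a commutative `R`-algebra admitting an `R`-algebra retraction `σ : S → R`,
and `M` is an `R`-module whose base change `S ⊗[R] M` is a free `S`-module,
then `M` is a free `R`-module. -/
theorem free_of_free_baseChange_of_retraction
    (R S : Type*) [CommRing R] [CommRing S] [Algebra R S]
    (σ : S →ₐ[R] R) (M : Type*) [AddCommGroup M] [Module R M]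
    (hfree : Module.Free S (S ⊗[R] M)) : Module.Free R M := by
  letI : Algebra S R := σ.toRingHom.toAlgebra
  haveI : IsScalarTower R S R := IsScalarTower.of_algebraMap_eq (fun r => (σ.commutes r).symm)
  haveI : Module.Free R (R ⊗[S] (S ⊗[R] M)) := Algebra.TensorProduct.instFree S R (S ⊗[R] M)
  exact Module.Free.of_equiv
    ((TensorProduct.AlgebraTensorModule.cancelBaseChange R S R R M).trans
      (TensorProduct.lid R M))
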